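/- There is no tournament T with two distinct minimal τ-retentive sets R1 and R2 where |R1| = 3 and |R2| ≤ 12; equivalently, if a tournament has a minimal τ-retentive set of size 3, it has no other minimal τ-retentive set of size at most 12. -/

import Mathlib

variable {V : Type}

/-- Inneighbors of `v` inside the subtournament on `s` (excluding `v` itself). -/
def inn [DecidableEq V] (r : V → V → Prop) [DecidableRel r] (s : Finset V) (v : V) :
    Finset V :=
  (s.filter fun u => r u v).erase v

lemma inn_card_lt [DecidableEq V] (r : V → V → Prop) [DecidableRel r]
    (s : Finset V) (v : V) (hv : v ∈ s) : (inn r s v).card < s.card := by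
  have h1 : inn r s v ⊆ s.erase v := by
    intro x hx
    rcases Finset.mem_erase.mp hx with ⟨hxv, hx2⟩
    exact Finset.mem_erase.mpr ⟨hxv, (Finset.mem_filter.mp hx2).1⟩
  calc (inn r s v).card ≤ (s.erase v).card := Finset.card_le_card h1
    _ < s.card := Finset.card_erase_lt_of_mem hv

/-- The tournament equilibrium set of the subtournament of `r` on `s`:
the union of all minimal τ-retentive sets. -/
def tau [DecidableEq V] (r : V → V → Prop) [DecidableRel r] (s : Finset V) : Set V :=
  {x | ∃ A : Finset V, x ∈ A ∧ A ⊆ s ∧ A.Nonempty ∧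
    (∀ v, v ∈ s → v ∈ A → ((inn r s v).Nonempty → tau r (inn r s v) ⊆ ↑A)) ∧
    ∀ B : Finset V, B ⊆ s → B ⊂ A →
      ¬ (B.Nonempty ∧
        ∀ v, v ∈ s → v ∈ B → ((inn r s v).Nonempty → tau r (inn r s v) ⊆ ↑B))}
termination_by s.card
decreasing_by
  all_goals exact inn_card_lt r s v (by assumption)

/-- `A` is a τ-retentive set of the tournament on `s`. -/
def Retentive [DecidableEq V] (r : V → V → Prop) [DecidableRel r] (s A : Finset V) : Prop :=
  A ⊆ s ∧ A.Nonempty ∧ ∀ v ∈ A, (inn r s v).Nonempty → tau r (inn r s v) ⊆ ↑A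

/-- `A` is a minimal τ-retentive set of the tournament on `s`. -/
def MinRetentive [DecidableEq V] (r : V → V → Prop) [DecidableRel r] (s A : Finset V) : Prop :=
  Retentive r s A ∧ ∀ B, Retentive r s B → B ⊆ A → B = A

/-- `r` is a tournament on the vertex set `s`. -/
def IsTournament (r : V → V → Prop) (s : Finset V) : Prop :=
  (∀ v ∈ s, ¬ r v v) ∧ ∀ u ∈ s, ∀ v ∈ s, u ≠ v → (r u v ↔ ¬ r v u)

/-- `u` is the captain of `v` in the subtournament on `s`:
`u` dominates `v` and all other inneighbors of `v`. -/
def IsCaptain (r : V → V → Prop) (s : Finset V) (u v : V) : Prop :=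
  u ∈ s ∧ v ∈ s ∧ r u v ∧ ∀ w ∈ s, w ≠ u → r w v → r u w

/-- The (undirected) domination graph of the subtournament on `s`. -/
def domGraph (r : V → V → Prop) (s : Finset V) : SimpleGraph V where
  Adj u v := (IsCaptain r s u v ∨ IsCaptain r s v u) ∧ u ≠ v
  symm := by
    constructor
    intro u v h
    exact ⟨h.1.symm, h.2.symm⟩
  loopless := by
    constructor
    intro u h
    exact h.2 rfl

/-!
No vertex outside the triangle `R1` beats two of its vertices, so every `v ∉ R1` is beaten by two
consecutive vertices `x → y` of `R1`, and `x` is the captain of `y`. Take `v ∈ R2` of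
in-degree at most five inside `R2` (the in-degrees of a tournament on `n ≤ 12` vertices sum to
`n(n-1)/2 < 6n`). The minimal retentive sets of the in-neighbourhood of `v` lie in `R2` and have at
most five elements, so it suffices that every minimal retentive set `Q` with `|Q| ≤ 5` meets every
captain pair (`R1` and `R2` being disjoint).

If `w` is the captain of `m`, then `w` is a Condorcet winner of the in-neighbourhood of `m`, whose
τ is therefore `{w}`. So if every member of `Q` has a captain, every subset of `Q` closed under the
captain map is retentive, and the captain map is a cyclic permutation of `Q`. Along it, "beats `x`"
alternates, so `|Q|` is even; with sizes 2 and 4 excluded separately, this settles all cases but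
`|Q| = 5` with a member `u` whose in-neighbourhood has a triangle as minimal retentive set. That
triangle has two consecutive members on the other side of `x` from `u`, and following captains from
them closes a cycle of length three, on which "beats `x`" cannot alternate.
-/

section Orbit

variable {α : Type*} {f : α → α} {x : α} {n : ℕ}

theorem even_of_iterate_eq_self {s : Set α} {p : α → Prop} (hf : Set.MapsTo f s s)
    (hp : ∀ a ∈ s, p (f a) ↔ ¬ p a) (hx : x ∈ s) (h : f^[n] x = x) : Even n := by
  have key : ∀ k, p (f^[k] x) ↔ (Even k ↔ p x) := by
    intro k
    induction k with
    | zero => simp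
    | succ k ih =>
      rw [Function.iterate_succ_apply', hp _ (hf.iterate k hx), ih, Nat.even_add_one]
      tauto
  have := key n
  rw [h] at this
  tauto

variable [DecidableEq α] {s : Finset α}

theorem card_le_of_iterate_eq_self (hf : Set.MapsTo f s s)
    (hmin : ∀ t ⊆ s, t.Nonempty → Set.MapsTo f t t → t = s) (hx : x ∈ s) (hn : 0 < n)
    (h : f^[n] x = x) : s.card ≤ n := by
  set t := (Finset.range n).image (fun k => f^[k] x)
  have hts : t ⊆ s := by
    intro z hz
    obtain ⟨k, -, rfl⟩ := Finset.mem_image.mp hz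
    exact hf.iterate k hx
  have hft : Set.MapsTo f t t := by
    intro z hz
    obtain ⟨k, hk, rfl⟩ := Finset.mem_image.mp hz
    simp only [t, Finset.coe_image, Finset.coe_range, Set.mem_image, Set.mem_Iio]
    rw [Finset.mem_range] at hk
    rcases (Nat.succ_le_of_lt hk).lt_or_eq with hk' | hk'
    · exact ⟨k + 1, hk', Function.iterate_succ_apply' f k x⟩
    · refine ⟨0, hn, ?_⟩
      rw [← Function.iterate_succ_apply' f k x, hk', h, Function.iterate_zero_apply]
  rw [← hmin t hts ⟨x, Finset.mem_image.mpr ⟨0, Finset.mem_range.mpr hn, rfl⟩⟩ hft]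
  exact Finset.card_image_le.trans (Finset.card_range n).le

theorem iterate_card_eq_self (hf : Set.MapsTo f s s)
    (hmin : ∀ t ⊆ s, t.Nonempty → Set.MapsTo f t t → t = s) (hx : x ∈ s) :
    f^[s.card] x = x := by
  obtain ⟨i, hi, j, hj, hij, heq⟩ := Finset.exists_ne_map_eq_of_card_lt_of_maps_to
    (s := Finset.range (s.card + 1)) (f := fun k => f^[k] x) (by simp)
    (fun k _ => hf.iterate k hx)
  simp only [Finset.mem_range] at hi hj heq
  wlog hlt : i < j generalizing i j
  · exact this j i hij.symm heq.symm hj hi (by omega)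
  have hper : f^[j - i] (f^[i] x) = f^[i] x := by
    rw [← Function.iterate_add_apply, Nat.sub_add_cancel hlt.le, heq]
  have := card_le_of_iterate_eq_self hf hmin (hf.iterate i hx) (by omega) hper
  obtain rfl : i = 0 := by omega
  obtain rfl : j = s.card := by omega
  exact heq.symm

end Orbit

theorem exists_forall_eq_or_of_card_eq_five {α : Type*} [DecidableEq α] {Q : Finset α}
    {a b c d : α} (h5 : Q.card = 5) (ha : a ∈ Q) (hb : b ∈ Q) (hc : c ∈ Q) (hd : d ∈ Q)
    (hab : a ≠ b) (hac : a ≠ c) (had : a ≠ d) (hbc : b ≠ c) (hbd : b ≠ d)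
    (hcd : c ≠ d) :
    ∃ e ∈ Q, e ≠ a ∧ e ≠ b ∧ e ≠ c ∧ e ≠ d ∧
      ∀ z ∈ Q, z = a ∨ z = b ∨ z = c ∨ z = d ∨ z = e := by
  have hcard : ((((Q.erase a).erase b).erase c).erase d).card = 1 := by
    rw [Finset.card_erase_of_mem, Finset.card_erase_of_mem, Finset.card_erase_of_mem,
      Finset.card_erase_of_mem ha, h5] <;>
    simp [*, hab.symm, hac.symm, had.symm, hbc.symm, hbd.symm, hcd.symm]
  obtain ⟨e, he⟩ := Finset.card_eq_one.mp hcard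
  have hemem : e ∈ (((Q.erase a).erase b).erase c).erase d := he ▸ Finset.mem_singleton_self e
  simp only [Finset.mem_erase] at hemem
  obtain ⟨hed, hec, heb, hea, heQ⟩ := hemem
  refine ⟨e, heQ, hea, heb, hec, hed, fun z hz => ?_⟩
  by_contra! hne
  have hz : z ∈ (((Q.erase a).erase b).erase c).erase d := by
    simp [hz, hne.1, hne.2.1, hne.2.2.1, hne.2.2.2.1]
  rw [he] at hz
  exact hne.2.2.2.2 (Finset.mem_singleton.mp hz)

section Tournament

variable {r : V → V → Prop} {s g Q : Finset V} {d m u v w x y z : V}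

namespace IsTournament

theorem mono (hT : IsTournament r s) (hg : g ⊆ s) : IsTournament r g :=
  ⟨fun v hv => hT.1 v (hg hv), fun u hu v hv => hT.2 u (hg hu) v (hg hv)⟩

theorem ne_of_rel (hT : IsTournament r g) (hu : u ∈ g) (h : r u v) : u ≠ v := by
  rintro rfl
  exact hT.1 u hu h

theorem not_rel_of_rel (hT : IsTournament r g) (hu : u ∈ g) (hv : v ∈ g) (h : r u v) :
    ¬ r v u :=
  (hT.2 u hu v hv (hT.ne_of_rel hu h)).mp h

theorem rel_of_not_rel (hT : IsTournament r g) (hu : u ∈ g) (hv : v ∈ g) (hne : u ≠ v)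
    (h : ¬ r u v) : r v u :=
  not_not.mp fun h' => h ((hT.2 u hu v hv hne).mpr h')

end IsTournament

namespace IsCaptain

theorem mono {s : Finset V} (h : IsCaptain r s x y) (hg : g ⊆ s) (hx : x ∈ g) (hy : y ∈ g) :
    IsCaptain r g x y :=
  ⟨hx, hy, h.2.2.1, fun w hw => h.2.2.2 w (hg hw)⟩

theorem rel_or_rel (hT : IsTournament r g) (h : IsCaptain r g w m) (hd : d ∈ g) (hdm : d ≠ m)
    (hdw : d ≠ w) : r m d ∨ r w d :=
  or_iff_not_imp_left.mpr fun hmd => h.2.2.2 d hd hdw (hT.rel_of_not_rel h.2.1 hd hdm.symm hmd)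

theorem not_rel_of_rel (hT : IsTournament r g) (h : IsCaptain r g x y) (hz : z ∈ g)
    (hzx : z ≠ x) (hzy : r z y) : ¬ r z x :=
  hT.not_rel_of_rel h.1 hz (h.2.2.2 z hz hzx hzy)

theorem rel_of_isCaptain (hT : IsTournament r g) (hwm : IsCaptain r g w m)
    (hzw : IsCaptain r g z w) (hzm : z ≠ m) : r m z :=
  hT.rel_of_not_rel hzw.1 hwm.2.1 hzm fun hzm' =>
    hwm.not_rel_of_rel hT hzw.1 (hT.ne_of_rel hzw.1 hzw.2.2.1) hzm' hzw.2.2.1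

theorem rel_iff_not_rel (hT : IsTournament r g) (hwm : IsCaptain r g w m)
    (hxy : IsCaptain r g x y) (hx : x ∉ Q) (hy : y ∉ Q) (hm : m ∈ Q) (hw : w ∈ Q) :
    r w x ↔ ¬ r m x := by
  constructor
  · intro hwx hmx
    have hmy : ¬ r m y := fun hmy =>
      hxy.not_rel_of_rel hT hwm.2.1 (ne_of_mem_of_not_mem hm hx) hmy hmx
    have hwy : r w y :=
      hwm.2.2.2 y hxy.2.1 (ne_of_mem_of_not_mem hw hy).symm
        (hT.rel_of_not_rel hwm.2.1 hxy.2.1 (ne_of_mem_of_not_mem hm hy) hmy)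
    exact hxy.not_rel_of_rel hT hwm.1 (ne_of_mem_of_not_mem hw hx) hwy hwx
  · intro hmx
    exact hwm.2.2.2 x hxy.1 (ne_of_mem_of_not_mem hw hx).symm
      (hT.rel_of_not_rel hwm.2.1 hxy.1 (ne_of_mem_of_not_mem hm hx) hmx)

end IsCaptain

end Tournament

section Retentive

variable [DecidableEq V] {r : V → V → Prop} [DecidableRel r] {g A B Q S T : Finset V}
  {d m u v w x y z : V}

theorem mem_inn : u ∈ inn r g v ↔ u ≠ v ∧ u ∈ g ∧ r u v := by
  simp [inn]

theorem inn_subset : inn r g v ⊆ g := fun _ h => (mem_inn.mp h).2.1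

theorem sum_card_inn_le_choose (hT : IsTournament r A) :
    ∑ v ∈ A, (inn r A v).card ≤ A.card.choose 2 := by
  rw [← Finset.card_sigma, ← Finset.card_powersetCard]
  refine Finset.card_le_card_of_injOn (fun p => {p.2, p.1}) (fun p hp => ?_) ?_
  · obtain ⟨hv, hu⟩ := Finset.mem_sigma.mp hp
    obtain ⟨hne, huA, -⟩ := mem_inn.mp hu
    simp [Finset.mem_powersetCard, Finset.insert_subset_iff, huA, hv, Finset.card_pair hne]
  · rintro ⟨v, u⟩ hp ⟨v', u'⟩ hp' h
    obtain ⟨hv, hu⟩ := Finset.mem_sigma.mp hp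
    obtain ⟨-, hu'⟩ := Finset.mem_sigma.mp hp'
    obtain ⟨-, huA, huv⟩ := mem_inn.mp hu
    obtain ⟨-, -, huv'⟩ := mem_inn.mp hu'
    have h' : ({u, v} : Set V) = {u', v'} := by
      rw [← Finset.coe_pair, ← Finset.coe_pair]
      exact congrArg _ h
    rcases Set.pair_eq_pair_iff.mp h' with ⟨rfl, rfl⟩ | ⟨rfl, rfl⟩
    · rfl
    · exact absurd huv' (hT.not_rel_of_rel huA hv huv)

theorem exists_card_inn_le_five (hT : IsTournament r A) (hA : A.Nonempty) (h12 : A.card ≤ 12) :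
    ∃ v ∈ A, (inn r A v).card ≤ 5 := by
  by_contra! h
  have hsum : 6 * A.card ≤ A.card.choose 2 := calc
    6 * A.card = ∑ _v ∈ A, 6 := by simp [mul_comm]
    _ ≤ ∑ v ∈ A, (inn r A v).card := Finset.sum_le_sum h
    _ ≤ A.card.choose 2 := sum_card_inn_le_choose hT
  have hpos := hA.card_pos
  generalize A.card = n at hsum hpos h12
  interval_cases n <;> simp [Nat.choose] at hsum

theorem MinRetentive.subset (hA : MinRetentive r g A) : A ⊆ g := hA.1.1

theorem MinRetentive.nonempty (hA : MinRetentive r g A) : A.Nonempty := hA.1.2.1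

theorem MinRetentive.tau_inn_subset (hA : MinRetentive r g A) (hv : v ∈ A)
    (hinn : (inn r g v).Nonempty) : tau r (inn r g v) ⊆ A :=
  hA.1.2.2 v hv hinn

theorem mem_tau_iff : x ∈ tau r g ↔ ∃ A, x ∈ A ∧ MinRetentive r g A := by
  rw [tau]
  constructor
  · rintro ⟨A, hxA, hAg, hAne, hret, hmin⟩
    refine ⟨A, hxA, ⟨hAg, hAne, fun v hv => hret v (hAg hv) hv⟩, fun B hB hBA => ?_⟩
    by_contra hne
    exact hmin B hB.1 (ssubset_of_subset_of_ne hBA hne) ⟨hB.2.1, fun v _ hvB => hB.2.2 v hvB⟩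
  · rintro ⟨A, hxA, ⟨hAg, hAne, hret⟩, hmin⟩
    refine ⟨A, hxA, hAg, hAne, fun v _ hv => hret v hv, ?_⟩
    rintro B hBg hBA ⟨hBne, hBret⟩
    exact hBA.ne (hmin B ⟨hBg, hBne, fun v hv => hBret v (hBg hv) hv⟩ hBA.subset)

theorem MinRetentive.coe_subset_tau (hA : MinRetentive r g A) : ↑A ⊆ tau r g :=
  fun _ hx => mem_tau_iff.mpr ⟨A, hx, hA⟩

theorem mem_of_mem_tau (hx : x ∈ tau r g) : x ∈ g := by
  obtain ⟨A, hxA, hA⟩ := mem_tau_iff.mp hx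
  exact hA.subset hxA

theorem exists_minRetentive (hg : g.Nonempty) : ∃ A, MinRetentive r g A := by
  classical
  have hret : Retentive r g g :=
    ⟨subset_rfl, hg, fun _ _ _ _ hx => inn_subset (mem_of_mem_tau hx)⟩
  obtain ⟨A, hA, hmin⟩ := (g.powerset.filter (Retentive r g)).exists_min_image Finset.card
    ⟨g, by simp [hret]⟩
  rw [Finset.mem_filter] at hA
  refine ⟨A, hA.2, fun B hB hBA => Finset.eq_of_subset_of_card_le hBA (hmin B ?_)⟩
  simp [hB, hB.1]

theorem tau_nonempty (hg : g.Nonempty) : (tau r g).Nonempty := by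
  obtain ⟨A, hA⟩ := exists_minRetentive (r := r) hg
  obtain ⟨x, hx⟩ := hA.nonempty
  exact ⟨x, hA.coe_subset_tau hx⟩

theorem minRetentive_disjoint (hA : MinRetentive r g A) (hB : MinRetentive r g B)
    (hne : A ≠ B) : Disjoint A B := by
  rw [Finset.disjoint_iff_ne]
  rintro x hxA _ hxB rfl
  have hret : Retentive r g (A ∩ B) :=
    ⟨Finset.inter_subset_left.trans hA.subset, ⟨x, Finset.mem_inter.mpr ⟨hxA, hxB⟩⟩,
      fun v hv hinn z hz => Finset.mem_inter.mpr
        ⟨hA.tau_inn_subset (Finset.mem_inter.mp hv).1 hinn hz,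
          hB.tau_inn_subset (Finset.mem_inter.mp hv).2 hinn hz⟩⟩
  exact hne ((hA.2 _ hret Finset.inter_subset_left).symm.trans
    (hB.2 _ hret Finset.inter_subset_right))

theorem minRetentive_singleton_iff : MinRetentive r g {w} ↔ w ∈ g ∧ inn r g w = ∅ := by
  constructor
  · intro hw
    refine ⟨hw.subset (Finset.mem_singleton_self w), Finset.not_nonempty_iff_eq_empty.mp ?_⟩
    intro hinn
    obtain ⟨z, hz⟩ := tau_nonempty (r := r) hinn
    have hzw : z = w :=
      Finset.mem_singleton.mp (hw.tau_inn_subset (Finset.mem_singleton_self w) hinn hz)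
    exact (mem_inn.mp (mem_of_mem_tau hz)).1 hzw
  · rintro ⟨hw, hinn⟩
    refine ⟨⟨Finset.singleton_subset_iff.mpr hw, Finset.singleton_nonempty w, ?_⟩, ?_⟩
    · intro v hv hne
      rw [Finset.mem_singleton.mp hv, hinn] at hne
      exact absurd hne Finset.not_nonempty_empty
    · intro B hB hBw
      exact (Finset.subset_singleton_iff.mp hBw).resolve_left hB.2.1.ne_empty

theorem tau_eq_singleton_of_inn_eq_empty (hT : IsTournament r g) (hw : w ∈ g)
    (hinn : inn r g w = ∅) :
    tau r g = {w} := by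
  induction hn : g.card using Nat.strong_induction_on generalizing g with
  | _ n ih =>
  have hsing : MinRetentive r g {w} := minRetentive_singleton_iff.mpr ⟨hw, hinn⟩
  have hmin : ∀ B, MinRetentive r g B → B = {w} := by
    intro B hB
    by_contra hne
    have hwB : w ∉ B := fun hwB =>
      hne (hB.2 {w} hsing.1 (Finset.singleton_subset_iff.mpr hwB)).symm
    obtain ⟨b, hb⟩ := hB.nonempty
    have hbg := hB.subset hb
    have hwb : w ∈ inn r g b := by
      have hbw : b ∉ inn r g w := hinn ▸ Finset.notMem_empty b
      have hne : w ≠ b := fun h => hwB (h ▸ hb)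
      refine mem_inn.mpr ⟨hne, hw, hT.rel_of_not_rel hbg hw hne.symm fun hbw' => hbw ?_⟩
      exact mem_inn.mpr ⟨hne.symm, hbg, hbw'⟩
    have hinn' : inn r (inn r g b) w = ∅ := by
      refine Finset.subset_empty.mp (hinn ▸ fun z hz => ?_)
      obtain ⟨hzw, hzg, hzr⟩ := mem_inn.mp hz
      exact mem_inn.mpr ⟨hzw, inn_subset hzg, hzr⟩
    have htau := ih _ (hn ▸ inn_card_lt r g b hbg) (hT.mono inn_subset) hwb hinn' rfl
    exact hwB (hB.tau_inn_subset hb ⟨w, hwb⟩ (htau ▸ Set.mem_singleton w))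
  ext z
  rw [mem_tau_iff, Set.mem_singleton_iff]
  constructor
  · rintro ⟨B, hzB, hB⟩
    exact Finset.mem_singleton.mp (hmin B hB ▸ hzB)
  · rintro rfl
    exact ⟨{z}, Finset.mem_singleton_self z, hsing⟩

theorem isCaptain_iff (hT : IsTournament r g) (hm : m ∈ g) :
    IsCaptain r g w m ↔ w ∈ inn r g m ∧ inn r (inn r g m) w = ∅ := by
  constructor
  · intro h
    refine ⟨mem_inn.mpr ⟨hT.ne_of_rel h.1 h.2.2.1, h.1, h.2.2.1⟩,
      Finset.eq_empty_of_forall_notMem fun z hz => ?_⟩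
    obtain ⟨hzw, hzm, hzw'⟩ := mem_inn.mp hz
    obtain ⟨-, hzg, hzm'⟩ := mem_inn.mp hzm
    exact hT.not_rel_of_rel h.1 hzg (h.2.2.2 z hzg hzw hzm') hzw'
  · rintro ⟨hw, hinn⟩
    obtain ⟨-, hwg, hwm⟩ := mem_inn.mp hw
    refine ⟨hwg, hm, hwm, fun z hz hzw hzm => hT.rel_of_not_rel hz hwg hzw fun hzw' => ?_⟩
    have hzinn : z ∈ inn r g m := mem_inn.mpr ⟨hT.ne_of_rel hz hzm, hz, hzm⟩
    exact Finset.notMem_empty z (hinn ▸ mem_inn.mpr ⟨hzw, hzinn, hzw'⟩)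

theorem IsCaptain.tau_inn_eq (hT : IsTournament r g) (h : IsCaptain r g w m) :
    tau r (inn r g m) = {w} :=
  have h' := (isCaptain_iff hT h.2.1).mp h
  tau_eq_singleton_of_inn_eq_empty (hT.mono inn_subset) h'.1 h'.2

theorem IsCaptain.mem_of_minRetentive (hT : IsTournament r g) (h : IsCaptain r g w m)
    (hQ : MinRetentive r g Q) (hm : m ∈ Q) : w ∈ Q := by
  have hw : w ∈ inn r g m := ((isCaptain_iff hT h.2.1).mp h).1
  exact hQ.tau_inn_subset hm ⟨w, hw⟩ (h.tau_inn_eq hT ▸ Set.mem_singleton w)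

theorem retentive_of_forall_isCaptain (hT : IsTournament r g) (hBg : B ⊆ g) (hB : B.Nonempty)
    (h : ∀ m ∈ B, ∃ w ∈ B, IsCaptain r g w m) : Retentive r g B := by
  refine ⟨hBg, hB, fun m hm _ => ?_⟩
  obtain ⟨w, hwB, hwm⟩ := h m hm
  rw [hwm.tau_inn_eq hT]
  exact Set.singleton_subset_iff.mpr hwB

theorem inn_nonempty_of_two_le_card (hQ : MinRetentive r g Q) (h2 : 2 ≤ Q.card) (hm : m ∈ Q) :
    (inn r g m).Nonempty := by
  rw [Finset.nonempty_iff_ne_empty]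
  intro hinn
  have hQm := hQ.2 {m} (minRetentive_singleton_iff.mpr ⟨hQ.subset hm, hinn⟩).1
    (Finset.singleton_subset_iff.mpr hm)
  rw [← hQm, Finset.card_singleton] at h2
  omega

theorem exists_rel_of_two_le_card (hQ : MinRetentive r g Q) (h2 : 2 ≤ Q.card) (hm : m ∈ Q) :
    ∃ z ∈ Q, r z m := by
  have hinn := inn_nonempty_of_two_le_card hQ h2 hm
  obtain ⟨z, hz⟩ := tau_nonempty (r := r) hinn
  exact ⟨z, hQ.tau_inn_subset hm hinn hz, (mem_inn.mp (mem_of_mem_tau hz)).2.2⟩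

theorem card_ne_two (hT : IsTournament r g) (hQ : MinRetentive r g Q) : Q.card ≠ 2 := by
  intro h2
  obtain ⟨a, b, hab, rfl⟩ := Finset.card_eq_two.mp h2
  have beaten_by_other :
      ∀ m ∈ ({a, b} : Finset V), ∃ z ∈ ({a, b} : Finset V), z ≠ m ∧ r z m :=
    fun m hm =>
      let ⟨z, hz, hzm⟩ := exists_rel_of_two_le_card hQ h2.ge hm
      ⟨z, hz, hT.ne_of_rel (hQ.subset hz) hzm, hzm⟩
  obtain ⟨z, hz, hza, hzr⟩ := beaten_by_other a (by simp)
  obtain ⟨z', hz', hz'b, hz'r⟩ := beaten_by_other b (by simp)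
  simp only [Finset.mem_insert, Finset.mem_singleton] at hz hz'
  obtain rfl : z = b := hz.resolve_left hza
  obtain rfl : z' = a := hz'.resolve_right hz'b
  exact hT.not_rel_of_rel (hQ.subset (by simp)) (hQ.subset (by simp)) hzr hz'r

theorem not_forall_rel (hT : IsTournament r g) (hQ : MinRetentive r g Q) (h2 : 2 ≤ Q.card)
    (hm : m ∈ Q) : ¬ ∀ z ∈ Q, z ≠ m → r z m := by
  intro hall
  have hret : Retentive r g (Q.erase m) := by
    refine ⟨(Q.erase_subset m).trans hQ.subset, ?_, fun v hv hinn z hz => ?_⟩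
    · rw [← Finset.card_pos, Finset.card_erase_of_mem hm]
      omega
    · obtain ⟨hvm, hvQ⟩ := Finset.mem_erase.mp hv
      refine Finset.mem_erase.mpr ⟨?_, hQ.tau_inn_subset hvQ hinn hz⟩
      rintro rfl
      exact hT.not_rel_of_rel (hQ.subset hvQ) (hQ.subset hm) (hall v hvQ hvm)
        (mem_inn.mp (mem_of_mem_tau hz)).2.2
  have hmQ : m ∈ Q.erase m := by rw [hQ.2 _ hret (Q.erase_subset m)]; exact hm
  exact Finset.notMem_erase m Q hmQ

theorem exists_isCaptain_or_triangle (hT : IsTournament r g) (hQ : MinRetentive r g Q)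
    (h2 : 2 ≤ Q.card) (h5 : Q.card ≤ 5) (hm : m ∈ Q) :
    (∃ w, IsCaptain r g w m) ∨
      ∃ S, MinRetentive r (inn r g m) S ∧ S.card = 3 ∧ S ⊂ Q.erase m := by
  obtain ⟨S, hS⟩ := exists_minRetentive (r := r) (inn_nonempty_of_two_le_card hQ h2 hm)
  have hSQ : S ⊆ Q.erase m := fun z hz =>
    Finset.mem_erase.mpr ⟨(mem_inn.mp (hS.subset hz)).1,
      hQ.tau_inn_subset hm (inn_nonempty_of_two_le_card hQ h2 hm) (hS.coe_subset_tau hz)⟩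
  have hSQ' : S ⊂ Q.erase m := by
    refine Finset.ssubset_iff_subset_ne.mpr ⟨hSQ, fun hSeq => not_forall_rel hT hQ h2 hm ?_⟩
    intro z hz hzm
    exact (mem_inn.mp (hS.subset (hSeq ▸ Finset.mem_erase.mpr ⟨hzm, hz⟩))).2.2
  have hcard := Finset.card_lt_card hSQ'
  rw [Finset.card_erase_of_mem hm] at hcard
  have hS2 := card_ne_two (hT.mono inn_subset) hS
  have hS0 := hS.nonempty.card_pos
  obtain hS1 | hS3 : S.card = 1 ∨ S.card = 3 := by omega
  · obtain ⟨w, rfl⟩ := Finset.card_eq_one.mp hS1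
    exact Or.inl ⟨w, (isCaptain_iff hT (hQ.subset hm)).mpr (minRetentive_singleton_iff.mp hS)⟩
  · exact Or.inr ⟨S, hS, hS3, hSQ'⟩

theorem exists_isCaptain_of_card_le_four (hT : IsTournament r g) (hQ : MinRetentive r g Q)
    (h2 : 2 ≤ Q.card) (h4 : Q.card ≤ 4) (hm : m ∈ Q) : ∃ w, IsCaptain r g w m := by
  refine (exists_isCaptain_or_triangle hT hQ h2 (by omega) hm).resolve_right ?_
  rintro ⟨S, -, hS3, hSQ⟩
  have := Finset.card_lt_card hSQ
  rw [Finset.card_erase_of_mem hm] at this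
  omega

theorem exists_isCaptain_of_inNbrs_subset (hT : IsTournament r g) (hQ : MinRetentive r g Q)
    (h2 : 2 ≤ Q.card) (h5 : Q.card ≤ 5) (hm : m ∈ Q) (hT2 : T.card ≤ 2)
    (hin : ∀ z ∈ Q, r z m → z ∈ T) : ∃ w ∈ T, IsCaptain r g w m := by
  rcases exists_isCaptain_or_triangle hT hQ h2 h5 hm with ⟨w, hw⟩ | ⟨S, hS, hS3, hSQ⟩
  · exact ⟨w, hin w (hw.mem_of_minRetentive hT hQ hm) hw.2.2.1, hw⟩
  · have hST : S ⊆ T := fun z hz =>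
      hin z (Finset.mem_of_mem_erase (hSQ.subset hz)) (mem_inn.mp (hS.subset hz)).2.2
    have := Finset.card_le_card hST
    omega

theorem exists_captain_map (hT : IsTournament r g) (hQ : MinRetentive r g Q)
    (h : ∀ m ∈ Q, ∃ w, IsCaptain r g w m) :
    ∃ cap : V → V, (∀ m ∈ Q, IsCaptain r g (cap m) m) ∧ Set.MapsTo cap Q Q ∧
      ∀ t ⊆ Q, t.Nonempty → Set.MapsTo cap t t → t = Q := by
  choose! cap hcap using h
  refine ⟨cap, hcap, fun m hm => (hcap m hm).mem_of_minRetentive hT hQ hm,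
    fun t htQ ht hmaps => hQ.2 t ?_ htQ⟩
  exact retentive_of_forall_isCaptain hT (htQ.trans hQ.subset) ht
    fun m hm => ⟨cap m, hmaps hm, hcap m (htQ hm)⟩

theorem even_card_of_forall_isCaptain (hT : IsTournament r g) (hQ : MinRetentive r g Q)
    (h : ∀ m ∈ Q, ∃ w, IsCaptain r g w m) (hxy : IsCaptain r g x y) (hx : x ∉ Q)
    (hy : y ∉ Q) : Even Q.card := by
  obtain ⟨cap, hcap, hmaps, hmin⟩ := exists_captain_map hT hQ h
  obtain ⟨m, hm⟩ := hQ.nonempty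
  exact even_of_iterate_eq_self (p := fun z => r z x) hmaps
    (fun a ha => (hcap a ha).rel_iff_not_rel hT hxy hx hy ha (hmaps ha)) hm
    (iterate_card_eq_self hmaps hmin hm)

theorem card_ne_four (hT : IsTournament r g) (hQ : MinRetentive r g Q) : Q.card ≠ 4 := by
  intro h4
  obtain ⟨cap, hcap, hmaps, hmin⟩ := exists_captain_map hT hQ
    fun m hm => exists_isCaptain_of_card_le_four hT hQ (by omega) (by omega) hm
  have hfar : ∀ a ∈ Q, r a (cap (cap a)) := fun a ha =>
    (hcap a ha).rel_of_isCaptain hT (hcap _ (hmaps ha)) fun h => by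
      have := card_le_of_iterate_eq_self hmaps hmin ha two_pos h
      omega
  obtain ⟨m, hm⟩ := hQ.nonempty
  have hm4 : cap (cap (cap (cap m))) = m := by
    simpa [h4] using iterate_card_eq_self hmaps hmin hm
  have hback := hfar _ (hmaps (hmaps hm))
  rw [hm4] at hback
  exact hT.not_rel_of_rel (hQ.subset hm) (hQ.subset (hmaps (hmaps hm))) (hfar m hm) hback

theorem exists_isCaptain_rel_of_card_eq_three (hT : IsTournament r g) (hA : MinRetentive r g A)
    (h3 : A.card = 3) (hd : d ∈ g) (hdA : d ∉ A) :
    ∃ a ∈ A, ∃ b ∈ A, ∃ c ∈ A,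
      IsCaptain r g a b ∧ r b c ∧ r c a ∧ r a d ∧ r b d := by
  obtain ⟨cap, hcap, hmaps, hmin⟩ := exists_captain_map hT hA
    fun m hm => exists_isCaptain_of_card_le_four hT hA (by omega) (by omega) hm
  have of_pair : ∀ m ∈ A, r m d → r (cap m) d →
      ∃ a ∈ A, ∃ b ∈ A, ∃ c ∈ A,
        IsCaptain r g a b ∧ r b c ∧ r c a ∧ r a d ∧ r b d :=
    fun m hm hmd hcmd => ⟨cap m, hmaps hm, m, hm, cap (cap m), hmaps (hmaps hm), hcap m hm,
      (hcap m hm).rel_of_isCaptain hT (hcap _ (hmaps hm)) (fun h => by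
        have := card_le_of_iterate_eq_self hmaps hmin hm two_pos h
        omega),
      (hcap _ (hmaps hm)).2.2.1, hcmd, hmd⟩
  have beats : ∀ m ∈ A, r m d ∨ r (cap m) d := fun m hm =>
    (hcap m hm).rel_or_rel hT hd (fun h => hdA (h ▸ hm)) (fun h => hdA (h ▸ hmaps hm))
  obtain ⟨m, hm⟩ := hA.nonempty
  have hm3 : cap (cap (cap m)) = m := by
    simpa [h3] using iterate_card_eq_self hmaps hmin hm
  have h0 := beats m hm
  have h1 := beats _ (hmaps hm)
  have h2 := beats _ (hmaps (hmaps hm))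
  rw [hm3] at h2
  by_cases h01 : r m d ∧ r (cap m) d
  · exact of_pair m hm h01.1 h01.2
  by_cases h12 : r (cap m) d ∧ r (cap (cap m)) d
  · exact of_pair _ (hmaps hm) h12.1 h12.2
  exact of_pair _ (hmaps (hmaps hm)) (by tauto) (by rw [hm3]; tauto)

theorem exists_triangle_rel_iff_not_rel (hT : IsTournament r g) (hxy : IsCaptain r g x y)
    (hu : u ∈ g) (hux : u ≠ x) (huy : u ≠ y) (hS : MinRetentive r (inn r g u) S)
    (hS3 : S.card = 3) (hxS : x ∉ S) (hyS : y ∉ S) :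
    ∃ a ∈ S, ∃ b ∈ S, ∃ c ∈ S, IsCaptain r (inn r g u) a b ∧ r b c ∧ r c a ∧
      (r a x ↔ ¬ r u x) ∧ (r b x ↔ ¬ r u x) := by
  -- `d` is whichever of `x`, `y` beats `u`
  obtain ⟨d, hd, hdS, hside⟩ :
      ∃ d ∈ inn r g u, d ∉ S ∧ ∀ z ∈ S, r z d → (r z x ↔ ¬ r u x) := by
    by_cases hux' : r u x
    · have hyu : r y u := hT.rel_of_not_rel hu hxy.2.1 huy
        fun huy' => hxy.not_rel_of_rel hT hu hux huy' hux'
      refine ⟨y, mem_inn.mpr ⟨huy.symm, hxy.2.1, hyu⟩, hyS, fun z hz hzy => ?_⟩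
      have hzx : z ≠ x := fun h => hxS (h ▸ hz)
      simp [hux', hxy.not_rel_of_rel hT (inn_subset (hS.subset hz)) hzx hzy]
    · have hxu : r x u := hT.rel_of_not_rel hu hxy.1 hux hux'
      exact ⟨x, mem_inn.mpr ⟨hux.symm, hxy.1, hxu⟩, hxS, fun z _ hzx => by simp [hzx, hux']⟩
  obtain ⟨a, ha, b, hb, c, hc, hab, hbc, hca, had, hbd⟩ :=
    exists_isCaptain_rel_of_card_eq_three (hT.mono inn_subset) hS hS3 hd hdS
  exact ⟨a, ha, b, hb, c, hc, hab, hbc, hca, hside a ha had, hside b hb hbd⟩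

theorem mem_or_mem_of_isCaptain_of_triangle (hT : IsTournament r g) (hQ : MinRetentive r g Q)
    (h5 : Q.card = 5) (hxy : IsCaptain r g x y) (hu : u ∈ Q)
    (hS : MinRetentive r (inn r g u) S) (hS3 : S.card = 3) (hSQ : S ⊆ Q) :
    x ∈ Q ∨ y ∈ Q := by
  by_contra! hxyQ
  obtain ⟨hx, hy⟩ := hxyQ
  have asymm : ∀ {a b : V}, a ∈ Q → b ∈ Q → r a b → ¬ r b a := fun ha hb =>
    hT.not_rel_of_rel (hQ.subset ha) (hQ.subset hb)
  have flip : ∀ {w m : V}, IsCaptain r g w m → m ∈ Q → w ∈ Q → (r w x ↔ ¬ r m x) :=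
    fun hwm hm hw => hwm.rel_iff_not_rel hT hxy hx hy hm hw
  obtain ⟨s1, hs1, s2, hs2, s3, hs3, h12, h23, h31, side1, side2⟩ :=
    exists_triangle_rel_iff_not_rel hT hxy (hQ.subset hu) (ne_of_mem_of_not_mem hu hx)
      (ne_of_mem_of_not_mem hu hy) hS hS3 (fun h => hx (hSQ h)) (fun h => hy (hSQ h))
  obtain ⟨hs1u, -, hs1u'⟩ := mem_inn.mp (hS.subset hs1)
  obtain ⟨hs2u, -, hs2u'⟩ := mem_inn.mp (hS.subset hs2)
  obtain ⟨hs3u, -, hs3u'⟩ := mem_inn.mp (hS.subset hs3)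
  have hs1Q := hSQ hs1
  have hs2Q := hSQ hs2
  have hs3Q := hSQ hs3
  obtain ⟨e, heQ, -, hes1, -, -, hQenum⟩ :=
    exists_forall_eq_or_of_card_eq_five h5 hu hs1Q hs2Q hs3Q
    hs1u.symm hs2u.symm hs3u.symm (hT.ne_of_rel (hQ.subset hs1Q) h12.2.2.1)
    (hT.ne_of_rel (hQ.subset hs3Q) h31).symm (hT.ne_of_rel (hQ.subset hs2Q) h23)
  -- the captains of `s2`, `e`, `s3` are `e`, `s3`, `s2`
  have hcap2 : IsCaptain r g e s2 := by
    obtain ⟨w, hwT, hw⟩ := exists_isCaptain_of_inNbrs_subset (T := {s1, e}) hT hQ (by omega)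
      h5.le hs2Q Finset.card_le_two fun z hz hzs2 => by
        rcases hQenum z hz with rfl | rfl | rfl | rfl | rfl
        · exact absurd hzs2 (asymm hs2Q hz hs2u')
        · simp
        · exact absurd hzs2 (hT.1 z (hQ.subset hz))
        · exact absurd hzs2 (asymm hs2Q hz h23)
        · simp
    rcases Finset.mem_insert.mp hwT with rfl | hwe
    · have := flip hw hs2Q hs1Q
      tauto
    · rwa [Finset.mem_singleton.mp hwe] at hw
  have he1 : r e s1 := hcap2.2.2.2 s1 (hQ.subset hs1Q) hes1.symm h12.2.2.1
  have hcapE : IsCaptain r g s3 e := by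
    obtain ⟨w, hwT, hw⟩ := exists_isCaptain_of_inNbrs_subset (T := {u, s3}) hT hQ (by omega)
      h5.le heQ Finset.card_le_two fun z hz hze => by
        rcases hQenum z hz with rfl | rfl | rfl | rfl | rfl
        · simp
        · exact absurd hze (asymm heQ hz he1)
        · exact absurd hze (asymm heQ hz hcap2.2.2.1)
        · simp
        · exact absurd hze (hT.1 z (hQ.subset hz))
    rcases Finset.mem_insert.mp hwT with rfl | hws3
    · have := flip hw heQ hu
      have := flip hcap2 hs2Q heQ
      tauto
    · rwa [Finset.mem_singleton.mp hws3] at hw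
  obtain ⟨w, hwT, hw⟩ := exists_isCaptain_of_inNbrs_subset (T := {s2}) hT hQ (by omega)
    h5.le hs3Q (by simp) fun z hz hz3 => by
      rcases hQenum z hz with rfl | rfl | rfl | rfl | rfl
      · exact absurd hz3 (asymm hs3Q hz hs3u')
      · exact absurd hz3 (asymm hs3Q hz h31)
      · simp
      · exact absurd hz3 (hT.1 z (hQ.subset hz))
      · exact absurd hz3 (asymm hs3Q hz hcapE.2.2.1)
  rw [Finset.mem_singleton.mp hwT] at hw
  have := flip hw hs3Q hs2Q
  have := flip hcapE heQ hs3Q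
  have := flip hcap2 hs2Q heQ
  tauto

theorem mem_or_mem_of_isCaptain_of_card_le_five (hT : IsTournament r g) (hQ : MinRetentive r g Q)
    (h5 : Q.card ≤ 5) (hxy : IsCaptain r g x y) : x ∈ Q ∨ y ∈ Q := by
  by_contra! hxyQ
  obtain ⟨hx, hy⟩ := hxyQ
  have h2 := card_ne_two hT hQ
  have h4 := card_ne_four hT hQ
  have hpos := hQ.nonempty.card_pos
  by_cases hall : ∀ m ∈ Q, ∃ w, IsCaptain r g w m
  · have := Nat.even_iff.mp (even_card_of_forall_isCaptain hT hQ hall hxy hx hy)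
    omega
  push Not at hall
  obtain ⟨u, hu, hno⟩ := hall
  obtain h1 | h24 | h5 : Q.card = 1 ∨ (2 ≤ Q.card ∧ Q.card ≤ 4) ∨ Q.card = 5 := by omega
  · obtain ⟨w, rfl⟩ := Finset.card_eq_one.mp h1
    obtain ⟨hwg, hinn⟩ := minRetentive_singleton_iff.mp hQ
    have not_inn : ∀ z ∈ g, z ≠ w → ¬ r z w := fun z hz hzw hzw' =>
      Finset.notMem_empty z (hinn ▸ mem_inn.mpr ⟨hzw, hz, hzw'⟩)
    have hxw : x ≠ w := fun h => hx (h ▸ Finset.mem_singleton_self x)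
    have hyw : y ≠ w := fun h => hy (h ▸ Finset.mem_singleton_self y)
    have hwy : r w y := hT.rel_of_not_rel hxy.2.1 hwg hyw (not_inn y hxy.2.1 hyw)
    exact not_inn x hxy.1 hxw (hxy.2.2.2 w hwg hxw.symm hwy)
  · obtain ⟨w, hw⟩ := exists_isCaptain_of_card_le_four hT hQ h24.1 h24.2 hu
    exact hno w hw
  · obtain ⟨S, hS, hS3, hSQ⟩ :=
      (exists_isCaptain_or_triangle hT hQ (by omega) h5.le hu).resolve_left
        fun ⟨w, hw⟩ => hno w hw
    exact absurd (mem_or_mem_of_isCaptain_of_triangle hT hQ h5 hxy hu hS hS3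
      (hSQ.subset.trans (Q.erase_subset u))) (not_or.mpr ⟨hx, hy⟩)

end Retentive

theorem stmt18 [DecidableEq V] (r : V → V → Prop) [DecidableRel r] (s : Finset V)
    (hT : IsTournament r s) (R1 R2 : Finset V)
    (h1 : MinRetentive r s R1) (h2 : MinRetentive r s R2) (hne : R1 ≠ R2)
    (hc1 : R1.card = 3) (hc2 : R2.card ≤ 12) :
    False := by
  have hdisj := minRetentive_disjoint h1 h2 hne
  obtain ⟨v, hv, hdeg⟩ := exists_card_inn_le_five (hT.mono h2.subset) h2.nonempty hc2
  obtain ⟨x, hx, y, hy, -, -, hxy, -, -, hxv, hyv⟩ :=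
    exists_isCaptain_rel_of_card_eq_three hT h1 hc1 (h2.subset hv)
      (Finset.disjoint_right.mp hdisj hv)
  have hxv' : x ∈ inn r s v :=
    mem_inn.mpr ⟨hT.ne_of_rel (h1.subset hx) hxv, h1.subset hx, hxv⟩
  have hyv' : y ∈ inn r s v :=
    mem_inn.mpr ⟨hT.ne_of_rel (h1.subset hy) hyv, h1.subset hy, hyv⟩
  obtain ⟨Q, hQ⟩ := exists_minRetentive (r := r) ⟨x, hxv'⟩
  have hQR2 : Q ⊆ inn r R2 v := fun z hz => by
    obtain ⟨hzv, -, hzr⟩ := mem_inn.mp (hQ.subset hz)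
    exact mem_inn.mpr ⟨hzv, h2.tau_inn_subset hv ⟨x, hxv'⟩ (hQ.coe_subset_tau hz), hzr⟩
  rcases mem_or_mem_of_isCaptain_of_card_le_five (hT.mono inn_subset) hQ
      ((Finset.card_le_card hQR2).trans hdeg)
      (hxy.mono inn_subset hxv' hyv') with h | h
  · exact Finset.disjoint_left.mp hdisj hx (inn_subset (hQR2 h))
  · exact Finset.disjoint_left.mp hdisj hy (inn_subset (hQR2 h))
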